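/- For the Static Black-Peg AB Game with 3 pegs and c ≥ 5 colors: suppose a feasible strategy contains a (1,1,⋆)-question Q, and suppose the color q₃ is missing on peg 0 and the color q₄ is missing on peg 1. Then q₃ ≠ q₄, and moreover Q 0 = q₄ or Q 1 = q₃. -/

import Mathlib

/-- The answer of a question `Q` to a secret `S`: the number of pegs where they agree. -/
def answer {p c : ℕ} (Q S : Fin p → Fin c) : ℕ :=
  (Finset.univ.filter fun i => Q i = S i).card

/-- A strategy (a list of pairwise distinct injective codes) is feasible if the list of
answers determines every injective secret uniquely. -/
def Feasible {p c : ℕ} (qs : List (Fin p → Fin c)) : Prop :=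
  qs.Nodup ∧ (∀ Q ∈ qs, Function.Injective Q) ∧
    ∀ S S' : Fin p → Fin c, Function.Injective S → Function.Injective S' →
      qs.map (fun Q => answer Q S) = qs.map (fun Q => answer Q S') → S = S'

/-- The number of questions of the strategy `qs` having color `q` on peg `i`. -/
def occ {p c : ℕ} (qs : List (Fin p → Fin c)) (i : Fin p) (q : Fin c) : ℕ :=
  qs.countP fun Q => decide (Q i = q)


/-! If both conclusions failed, the secrets `(Q 0, q₄, z)` and `(q₃, Q 1, z)`, for a fifth colour `z`,
would be valid and distinct, yet indistinguishable: `Q` scores exactly one hit against each, and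
every other question, since it shares neither `Q 0` nor `Q 1` and misses `q₃` on peg 0 and `q₄` on
peg 1, can only score on peg 2, where both secrets carry `z`. -/

open Function

lemma List.eq_of_countP_eq_one {α : Type*} {l : List α} {p : α → Bool} (h : l.countP p = 1)
    {a b : α} (ha : a ∈ l) (hb : b ∈ l) (hpa : p a) (hpb : p b) : a = b := by
  rw [List.countP_eq_length_filter, List.length_eq_one_iff] at h
  obtain ⟨x, hx⟩ := h
  have ha' : a ∈ l.filter p := List.mem_filter.mpr ⟨ha, hpa⟩
  have hb' : b ∈ l.filter p := List.mem_filter.mpr ⟨hb, hpb⟩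
  rw [hx, List.mem_singleton] at ha' hb'
  rw [ha', hb']

section

variable {p c : ℕ} {qs : List (Fin p → Fin c)}

lemma Feasible.eq_of_forall_answer_eq (hqs : Feasible qs) {S S' : Fin p → Fin c}
    (hS : Injective S) (hS' : Injective S') (h : ∀ Q ∈ qs, answer Q S = answer Q S') :
    S = S' :=
  hqs.2.2 S S' hS hS' (List.map_congr_left h)

lemma eq_of_occ_eq_one {i : Fin p} {Q Q' : Fin p → Fin c} (h : occ qs i (Q i) = 1)
    (hQ : Q ∈ qs) (hQ' : Q' ∈ qs) (hi : Q' i = Q i) : Q' = Q :=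
  List.eq_of_countP_eq_one h hQ' hQ (by simp [hi]) (by simp)

end

lemma answer_vec_three {c : ℕ} (Q : Fin 3 → Fin c) (a b d : Fin c) :
    answer Q ![a, b, d] =
      (if Q 0 = a then 1 else 0) + (if Q 1 = b then 1 else 0) + (if Q 2 = d then 1 else 0) := by
  rw [answer, Finset.card_filter, Fin.sum_univ_three]
  rfl

lemma injective_vec_three {c : ℕ} {a b d : Fin c} (hab : a ≠ b) (had : a ≠ d) (hbd : b ≠ d) :
    Injective ![a, b, d] := by
  intro i j h
  fin_cases i <;> fin_cases j <;> simp_all [eq_comm]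

lemma exists_ne_four {c : ℕ} (hc : 5 ≤ c) (a b d e : Fin c) :
    ∃ z, z ≠ a ∧ z ≠ b ∧ z ≠ d ∧ z ≠ e := by
  have hcard : ({a, b, d, e} : Finset (Fin c)).card < (Finset.univ : Finset (Fin c)).card :=
    calc ({a, b, d, e} : Finset (Fin c)).card ≤ 4 := Finset.card_le_four
      _ < c := hc
      _ = _ := (Finset.card_fin c).symm
  obtain ⟨z, -, hz⟩ := Finset.exists_mem_notMem_of_card_lt_card hcard
  simp only [Finset.mem_insert, Finset.mem_singleton, not_or] at hz
  exact ⟨z, hz⟩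

section

variable {c : ℕ} {qs : List (Fin 3 → Fin c)} {Q : Fin 3 → Fin c} {q₃ q₄ : Fin c}

lemma answer_swap_eq (hQ : Q ∈ qs) (hone : occ qs 0 (Q 0) = 1 ∧ occ qs 1 (Q 1) = 1)
    (h₃ : ∀ Q' ∈ qs, Q' 0 ≠ q₃) (h₄ : ∀ Q' ∈ qs, Q' 1 ≠ q₄) (z : Fin c) :
    ∀ Q' ∈ qs, answer Q' ![Q 0, q₄, z] = answer Q' ![q₃, Q 1, z] := by
  intro Q' hQ'
  rw [answer_vec_three, answer_vec_three]
  by_cases hQQ : Q' = Q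
  · subst hQQ
    simp [h₃ Q' hQ', h₄ Q' hQ']
  · have h0 : Q' 0 ≠ Q 0 := fun h => hQQ (eq_of_occ_eq_one hone.1 hQ hQ' h)
    have h1 : Q' 1 ≠ Q 1 := fun h => hQQ (eq_of_occ_eq_one hone.2 hQ hQ' h)
    simp [h0, h1, h₃ Q' hQ', h₄ Q' hQ']

lemma Feasible.apply_zero_eq_or_apply_one_eq (hc : 5 ≤ c) (hqs : Feasible qs) (hQ : Q ∈ qs)
    (hone : occ qs 0 (Q 0) = 1 ∧ occ qs 1 (Q 1) = 1)
    (h₃ : ∀ Q' ∈ qs, Q' 0 ≠ q₃) (h₄ : ∀ Q' ∈ qs, Q' 1 ≠ q₄) :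
    Q 0 = q₄ ∨ Q 1 = q₃ := by
  by_contra! ⟨h₀₄, h₁₃⟩
  obtain ⟨z, hz₀, hz₁, hz₃, hz₄⟩ := exists_ne_four hc (Q 0) (Q 1) q₃ q₄
  have hS : Injective ![Q 0, q₄, z] := injective_vec_three h₀₄ hz₀.symm hz₄.symm
  have hS' : Injective ![q₃, Q 1, z] := injective_vec_three h₁₃.symm hz₃.symm hz₁.symm
  have hSS' := hqs.eq_of_forall_answer_eq hS hS' (answer_swap_eq hQ hone h₃ h₄ z)
  exact h₃ Q hQ (congrFun hSS' 0)

end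

theorem statement12 (c : ℕ) (hc : 5 ≤ c) (qs : List (Fin 3 → Fin c))
    (hqs : Feasible qs) (Q : Fin 3 → Fin c) (hQ : Q ∈ qs)
    (hone : occ qs 0 (Q 0) = 1 ∧ occ qs 1 (Q 1) = 1)
    (q₃ q₄ : Fin c)
    (h₃ : ∀ Q' ∈ qs, Q' 0 ≠ q₃)
    (h₄ : ∀ Q' ∈ qs, Q' 1 ≠ q₄) :
    q₃ ≠ q₄ ∧ (Q 0 = q₄ ∨ Q 1 = q₃) := by
  have key := hqs.apply_zero_eq_or_apply_one_eq hc hQ hone h₃ h₄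
  refine ⟨?_, key⟩
  rintro rfl
  exact key.elim (h₃ Q hQ) (h₄ Q hQ)
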